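/- In ℂ[[x,y]], let I = (x² − xy + y², x²y + xy²) and let J be the ideal generated by all elements a₁² + a₂² + a₃² where aᵢ ∈ (hᵢ) for h₁ = −x, h₂ = y, h₃ = x − y, and a₁ + a₂ + a₃ = 0. Then I = J. Moreover, I contains (x,y)⁴. -/

import Mathlib

/-!
Writing `aᵢ = uᵢ hᵢ`, the relation `a₁ + a₂ + a₃ = 0` becomes `(u₁ - u₃) x = (u₂ - u₃) y`;
since `x, y` is a regular sequence this forces `u₁ - u₃ = u y` and `u₂ - u₃ = u x`. Hence the
admissible triples are `a₁ = -(γ + u y) x`, `a₂ = (γ + u x) y`, `a₃ = γ (x - y)`, with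
`a₁² + a₂² + a₃² = 2γ² (x² - xy + y²) + 2γu (x²y + xy²) + 2u² x²y²`.
Taking `(γ, u) = (1, 0), (1, ±1)` puts both generators of `I` into `J` (up to the units `2`, `4`).
Conversely every generator of `J` lies in `I` because `x²y² ∈ I`; indeed every degree-four
monomial `m` satisfies `3m ∈ I`, which also gives `(x, y)⁴ ⊆ I`.
-/

noncomputable section

def px : MvPowerSeries (Fin 2) ℂ := MvPowerSeries.X 0
def py : MvPowerSeries (Fin 2) ℂ := MvPowerSeries.X 1

open scoped Pointwise

namespace MvPowerSeries

variable {σ R : Type*} [CommSemiring R]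

theorem coeff_add_single_mul_X (m : σ →₀ ℕ) (φ : MvPowerSeries σ R) (s : σ) :
    coeff (m + Finsupp.single s 1) (φ * X s) = coeff m φ := by
  rw [X, coeff_add_mul_monomial, mul_one]

theorem isRightRegular_X (s : σ) : IsRightRegular (X s : MvPowerSeries σ R) := by
  intro φ ψ h
  ext m
  rw [← coeff_add_single_mul_X m φ s, ← coeff_add_single_mul_X m ψ s]
  exact congrArg _ h

theorem exists_eq_mul_X_of_mul_X_eq_mul_X {i j : σ} (hij : i ≠ j) {p q : MvPowerSeries σ R}
    (h : p * X i = q * X j) : ∃ t, p = t * X j ∧ q = t * X i := by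
  obtain ⟨t, rfl⟩ : X i ∣ q := by
    rw [X_dvd_iff]
    intro m hm
    have hpX : coeff (m + Finsupp.single j 1) (p * X i) = 0 :=
      X_dvd_iff.mp (dvd_mul_left _ _) _ (by simp [hm, hij])
    rwa [h, coeff_add_single_mul_X] at hpX
  refine ⟨t, isRightRegular_X i ?_, mul_comm _ _⟩
  calc p * X i = X i * t * X j := h
    _ = t * X j * X i := by ring

theorem isUnit_ofNat {k : Type*} [Field k] [CharZero k] (n : ℕ)
    [n.AtLeastTwo] : IsUnit (OfNat.ofNat n : MvPowerSeries σ k) := by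
  rw [isUnit_iff_constantCoeff, map_ofNat]
  exact IsUnit.mk0 _ (NeZero.ne _)

end MvPowerSeries

theorem exists_eq_pow_mul_pow_of_mem_pair_pow {M : Type*} [CommMonoid M] {a b z : M} {n : ℕ}
    (hz : z ∈ ({a, b} : Set M) ^ n) : ∃ i ≤ n, z = a ^ i * b ^ (n - i) := by
  induction n generalizing z with
  | zero => exact ⟨0, le_rfl, by simpa using hz⟩
  | succ n ih =>
    rw [pow_succ] at hz
    obtain ⟨w, hw, c, hc, rfl⟩ := hz
    obtain ⟨i, hi, rfl⟩ := ih hw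
    rcases hc with rfl | rfl
    · refine ⟨i + 1, by omega, ?_⟩
      rw [show n + 1 - (i + 1) = n - i by omega, pow_succ, mul_right_comm]
    · refine ⟨i, by omega, ?_⟩
      rw [show n + 1 - i = n - i + 1 by omega, pow_succ]
      exact mul_assoc _ _ _

section TriplePoint

variable {R : Type*} [CommRing R] (x y : R)

def conductorIdeal : Ideal R :=
  Ideal.span {x ^ 2 - x * y + y ^ 2, x ^ 2 * y + x * y ^ 2}

def admissibleSqSumIdeal : Ideal R :=
  Ideal.span {w : R | ∃ a1 a2 a3 : R,
    a1 ∈ Ideal.span {-x} ∧ a2 ∈ Ideal.span {y} ∧ a3 ∈ Ideal.span {x - y} ∧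
    a1 + a2 + a3 = 0 ∧ w = a1 ^ 2 + a2 ^ 2 + a3 ^ 2}

theorem admissible_sq_sum_eq (γ u : R) :
    (-(γ + u * y) * x) ^ 2 + ((γ + u * x) * y) ^ 2 + (γ * (x - y)) ^ 2 =
      2 * γ ^ 2 * (x ^ 2 - x * y + y ^ 2) + 2 * γ * u * (x ^ 2 * y + x * y ^ 2) +
        2 * u ^ 2 * (x ^ 2 * y ^ 2) := by
  ring

theorem admissible_sq_sum_mem (γ u : R) :
    (-(γ + u * y) * x) ^ 2 + ((γ + u * x) * y) ^ 2 + (γ * (x - y)) ^ 2 ∈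
      admissibleSqSumIdeal x y :=
  Ideal.subset_span ⟨_, _, _, Ideal.mem_span_singleton'.mpr ⟨γ + u * y, by ring⟩,
    Ideal.mem_span_singleton'.mpr ⟨_, rfl⟩, Ideal.mem_span_singleton'.mpr ⟨_, rfl⟩, by ring, rfl⟩

theorem conductorIdeal_le_admissibleSqSumIdeal (h2 : IsUnit (2 : R)) :
    conductorIdeal x y ≤ admissibleSqSumIdeal x y := by
  have h4 : IsUnit (4 : R) := by convert h2.mul h2 using 1; norm_num
  rw [conductorIdeal, Ideal.span_le]
  rintro g (rfl | rfl)
  · rw [SetLike.mem_coe, ← Ideal.unit_mul_mem_iff_mem _ h2]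
    convert admissible_sq_sum_mem x y 1 0 using 1
    ring
  · rw [SetLike.mem_coe, ← Ideal.unit_mul_mem_iff_mem _ h4]
    convert Ideal.sub_mem _ (admissible_sq_sum_mem x y 1 1) (admissible_sq_sum_mem x y 1 (-1))
      using 1
    ring

theorem mem_conductorIdeal_of_three_mul (h3 : IsUnit (3 : R)) {f : R} (u v : R)
    (h : 3 * f = u * (x ^ 2 - x * y + y ^ 2) + v * (x ^ 2 * y + x * y ^ 2)) :
    f ∈ conductorIdeal x y := by
  rw [← Ideal.unit_mul_mem_iff_mem _ h3, h]
  exact Ideal.mem_span_pair.mpr ⟨u, v, rfl⟩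

theorem pow_mul_pow_mem_conductorIdeal (h3 : IsUnit (3 : R)) {i : ℕ} (hi : i ≤ 4) :
    x ^ i * y ^ (4 - i) ∈ conductorIdeal x y := by
  interval_cases i <;> norm_num only
  · exact mem_conductorIdeal_of_three_mul x y h3 (3 * y ^ 2 + 2 * x * y) (y - 2 * x) (by ring)
  · exact mem_conductorIdeal_of_three_mul x y h3 (x * y) (2 * y - x) (by ring)
  · exact mem_conductorIdeal_of_three_mul x y h3 (-(x * y)) (x + y) (by ring)
  · exact mem_conductorIdeal_of_three_mul x y h3 (x * y) (2 * x - y) (by ring)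
  · exact mem_conductorIdeal_of_three_mul x y h3 (3 * x ^ 2 + 2 * x * y) (x - 2 * y) (by ring)

theorem span_pair_pow_four_le_conductorIdeal (h3 : IsUnit (3 : R)) :
    Ideal.span {x, y} ^ 4 ≤ conductorIdeal x y := by
  rw [Ideal.span, Submodule.span_pow, ← Ideal.span, Ideal.span_le]
  intro z hz
  obtain ⟨i, hi, rfl⟩ := exists_eq_pow_mul_pow_of_mem_pair_pow hz
  exact pow_mul_pow_mem_conductorIdeal x y h3 hi

variable {x y}

theorem exists_admissible_param
    (hxy : ∀ p q : R, p * x = q * y → ∃ t, p = t * y ∧ q = t * x) {a1 a2 a3 : R}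
    (ha1 : a1 ∈ Ideal.span {-x}) (ha2 : a2 ∈ Ideal.span {y}) (ha3 : a3 ∈ Ideal.span {x - y})
    (hsum : a1 + a2 + a3 = 0) :
    ∃ γ u, a1 = -(γ + u * y) * x ∧ a2 = (γ + u * x) * y ∧ a3 = γ * (x - y) := by
  obtain ⟨u1, rfl⟩ := Ideal.mem_span_singleton'.mp ha1
  obtain ⟨u2, rfl⟩ := Ideal.mem_span_singleton'.mp ha2
  obtain ⟨u3, rfl⟩ := Ideal.mem_span_singleton'.mp ha3
  obtain ⟨t, ht1, ht2⟩ := hxy (u1 - u3) (u2 - u3) (by linear_combination -hsum)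
  exact ⟨u3, t, by linear_combination -x * ht1, by linear_combination y * ht2, rfl⟩

theorem admissibleSqSumIdeal_le_conductorIdeal (h3 : IsUnit (3 : R))
    (hxy : ∀ p q : R, p * x = q * y → ∃ t, p = t * y ∧ q = t * x) :
    admissibleSqSumIdeal x y ≤ conductorIdeal x y := by
  rw [admissibleSqSumIdeal, Ideal.span_le]
  rintro w ⟨a1, a2, a3, ha1, ha2, ha3, hsum, rfl⟩
  obtain ⟨γ, u, rfl, rfl, rfl⟩ := exists_admissible_param hxy ha1 ha2 ha3 hsum
  have hg1 : x ^ 2 - x * y + y ^ 2 ∈ conductorIdeal x y := Ideal.subset_span (by simp)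
  have hg2 : x ^ 2 * y + x * y ^ 2 ∈ conductorIdeal x y := Ideal.subset_span (by simp)
  have hxy2 : x ^ 2 * y ^ 2 ∈ conductorIdeal x y :=
    pow_mul_pow_mem_conductorIdeal x y h3 (i := 2) (by norm_num)
  rw [SetLike.mem_coe, admissible_sq_sum_eq]
  exact add_mem (add_mem (Ideal.mul_mem_left _ _ hg1) (Ideal.mul_mem_left _ _ hg2))
    (Ideal.mul_mem_left _ _ hxy2)

end TriplePoint

/-- In `ℂ[[x,y]]`, the ideal `I = (x² − xy + y², x²y + xy²)` equals the ideal `J`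
generated by all `a₁² + a₂² + a₃²` with `aᵢ ∈ (hᵢ)` for `h₁ = −x`, `h₂ = y`,
`h₃ = x − y` and `a₁ + a₂ + a₃ = 0`; moreover `I` contains `(x,y)⁴`. -/
theorem stmt_13 :
    Ideal.span {px ^ 2 - px * py + py ^ 2, px ^ 2 * py + px * py ^ 2} =
        Ideal.span {w : MvPowerSeries (Fin 2) ℂ | ∃ a1 a2 a3 : MvPowerSeries (Fin 2) ℂ,
          a1 ∈ Ideal.span {-px} ∧ a2 ∈ Ideal.span {py} ∧ a3 ∈ Ideal.span {px - py} ∧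
          a1 + a2 + a3 = 0 ∧ w = a1 ^ 2 + a2 ^ 2 + a3 ^ 2} ∧
      (Ideal.span {px, py}) ^ 4 ≤
        Ideal.span {px ^ 2 - px * py + py ^ 2, px ^ 2 * py + px * py ^ 2} := by
  have h3 := MvPowerSeries.isUnit_ofNat (σ := Fin 2) (k := ℂ) 3
  have hxy : ∀ p q, p * px = q * py → ∃ t, p = t * py ∧ q = t * px :=
    fun _ _ => MvPowerSeries.exists_eq_mul_X_of_mul_X_eq_mul_X (by decide)
  exact ⟨le_antisymm
      (conductorIdeal_le_admissibleSqSumIdeal px py (MvPowerSeries.isUnit_ofNat 2))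
      (admissibleSqSumIdeal_le_conductorIdeal h3 hxy),
    span_pair_pow_four_le_conductorIdeal px py h3⟩
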